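/- arXiv:1706.04334 — 5 statements merged into one kernel-verified Lean document; each statement's English description precedes it below -/
import Mathlib

section
/- Let G be a graph, r a positive integer, and H a subgraph of G such that G - E(H) has at least 2r isolated vertices and pn(H) ≤ r. If the graph G - E(H) (after deleting isolated vertices) has n' non-isolated vertices and pn(G - E(H)) ≤ floor(n'/2), then pn(G) ≤ floor(n/2) where n is the number of non-isolated vertices of G. -/
/-!
Concatenating a decomposition of `H` into at most `r` paths with one of `G - E(H)` into at most
`n'/2` paths decomposes `G` into at most `r + n'/2` paths; the `2r` vertices of `G` that are
isolated in `G - E(H)` give `n ≥ n' + 2r`, so `r + n'/2 ≤ n/2`.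
-/

/-- A path decomposition of `G`: a list of paths of `G` whose edge sets are pairwise
disjoint and whose union is the edge set of `G`. -/
def IsPathDecomp {V : Type} (G : SimpleGraph V)
    (P : List (Σ u : V, Σ v : V, G.Walk u v)) : Prop :=
  (∀ p ∈ P, p.2.2.IsPath) ∧
  (∀ e : Sym2 V, e ∈ G.edgeSet ↔ ∃ p ∈ P, e ∈ p.2.2.edges) ∧
  P.Pairwise (fun p q => ∀ e, e ∈ p.2.2.edges → e ∉ q.2.2.edges)

namespace SimpleGraph

variable {V : Type} {A B G : SimpleGraph V}

def liftWalk (h : A ≤ G) (p : Σ u v : V, A.Walk u v) : Σ u v : V, G.Walk u v :=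
  ⟨p.1, p.2.1, p.2.2.mapLe h⟩

@[simp]
lemma edges_liftWalk (h : A ≤ G) (p : Σ u v : V, A.Walk u v) :
    (liftWalk h p).2.2.edges = p.2.2.edges :=
  Walk.edges_mapLe_eq_edges h p.2.2

lemma isPath_liftWalk (h : A ≤ G) (p : Σ u v : V, A.Walk u v) :
    (liftWalk h p).2.2.IsPath ↔ p.2.2.IsPath :=
  Walk.isPath_mapLe h

end SimpleGraph

section PathDecomp

open SimpleGraph

variable {V : Type} {A B G : SimpleGraph V}

lemma IsPathDecomp.pairwise_map_liftWalk {P : List (Σ u v : V, A.Walk u v)}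
    (hP : IsPathDecomp A P) (h : A ≤ G) :
    (P.map (liftWalk h)).Pairwise
      (fun p q => ∀ e, e ∈ p.2.2.edges → e ∉ q.2.2.edges) := by
  rw [List.pairwise_map]
  simpa only [edges_liftWalk] using hP.2.2

theorem IsPathDecomp.append_of_le (hA : A ≤ G) (hB : B ≤ G) (hAB : Disjoint A B)
    (hcover : G ≤ A ⊔ B) {PA : List (Σ u v : V, A.Walk u v)}
    {PB : List (Σ u v : V, B.Walk u v)} (hPA : IsPathDecomp A PA) (hPB : IsPathDecomp B PB) :
    IsPathDecomp G (PA.map (liftWalk hA) ++ PB.map (liftWalk hB)) := by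
  refine ⟨?paths, ?cover, ?disjoint⟩
  case paths =>
    simp only [List.mem_append, List.mem_map]
    rintro _ (⟨p, hp, rfl⟩ | ⟨p, hp, rfl⟩)
    · exact (isPath_liftWalk hA p).2 (hPA.1 p hp)
    · exact (isPath_liftWalk hB p).2 (hPB.1 p hp)
  case cover =>
    intro e
    have hsplit : e ∈ G.edgeSet ↔ e ∈ A.edgeSet ∨ e ∈ B.edgeSet := by
      rw [le_antisymm hcover (sup_le hA hB), edgeSet_sup, Set.mem_union]
    simp only [hsplit, hPA.2.1, hPB.2.1, List.mem_append, List.mem_map]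
    constructor
    · rintro (⟨p, hp, he⟩ | ⟨p, hp, he⟩)
      · exact ⟨_, .inl ⟨p, hp, rfl⟩, by simpa using he⟩
      · exact ⟨_, .inr ⟨p, hp, rfl⟩, by simpa using he⟩
    · rintro ⟨_, ⟨p, hp, rfl⟩ | ⟨p, hp, rfl⟩, he⟩
      · exact .inl ⟨p, hp, by simpa using he⟩
      · exact .inr ⟨p, hp, by simpa using he⟩
  case disjoint =>
    refine List.pairwise_append.2
      ⟨hPA.pairwise_map_liftWalk hA, hPB.pairwise_map_liftWalk hB, ?_⟩
    simp only [List.mem_map]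
    rintro _ ⟨p, -, rfl⟩ _ ⟨q, -, rfl⟩ e hep heq
    rw [edges_liftWalk] at hep heq
    exact Set.disjoint_left.1 (disjoint_edgeSet.2 hAB)
      (p.2.2.edges_subset_edgeSet hep) (q.2.2.edges_subset_edgeSet heq)

theorem exists_isPathDecomp_length_le_add (hA : A ≤ G) (hB : B ≤ G) (hAB : Disjoint A B)
    (hcover : G ≤ A ⊔ B) {a b : ℕ} (hpnA : ∃ P, IsPathDecomp A P ∧ P.length ≤ a)
    (hpnB : ∃ P, IsPathDecomp B P ∧ P.length ≤ b) :
    ∃ P, IsPathDecomp G P ∧ P.length ≤ a + b := by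
  obtain ⟨PA, hPA, hlenA⟩ := hpnA
  obtain ⟨PB, hPB, hlenB⟩ := hpnB
  refine ⟨_, hPA.append_of_le hA hB hAB hcover hPB, ?_⟩
  simp only [List.length_append, List.length_map]
  omega

end PathDecomp

theorem reducing_subgraph_lemma_general {V : Type} [Fintype V] (G H : SimpleGraph V)
    (r : ℕ) (hHG : H ≤ G)
    (hiso : 2 * r ≤ (G.support \ (G \ H).support).ncard)
    (hpnH : ∃ P, IsPathDecomp H P ∧ P.length ≤ r)
    (hpnG' : ∃ P, IsPathDecomp (G \ H) P ∧ P.length ≤ (G \ H).support.ncard / 2) :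
    ∃ P, IsPathDecomp G P ∧ P.length ≤ G.support.ncard / 2 := by
  obtain ⟨P, hP, hlen⟩ := exists_isPathDecomp_length_le_add hHG sdiff_le
    disjoint_sdiff_self_right (sup_sdiff_cancel_right hHG).ge hpnH hpnG'
  have hcard : (G.support \ (G \ H).support).ncard + (G \ H).support.ncard = G.support.ncard :=
    Set.ncard_sdiff_add_ncard_of_subset (SimpleGraph.support_mono sdiff_le) (Set.toFinite _)
  exact ⟨P, hP, by omega⟩

/-- If `H` is an `r`-reducing subgraph of `G` and `G - E(H)` is a Gallai graph,
then `G` is a Gallai graph. -/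
theorem reducing_subgraph_lemma {V : Type} [Fintype V] (G H : SimpleGraph V)
    (r : ℕ) (hr : 0 < r) (hHG : H ≤ G)
    (hiso : 2 * r ≤ (G.support \ (G \ H).support).ncard)
    (hpnH : ∃ P, IsPathDecomp H P ∧ P.length ≤ r)
    (hpnG' : ∃ P, IsPathDecomp (G \ H) P ∧ P.length ≤ (G \ H).support.ncard / 2) :
    ∃ P, IsPathDecomp G P ∧ P.length ≤ G.support.ncard / 2 :=
  reducing_subgraph_lemma_general G H r hHG hiso hpnH hpnG'
end

section
/- Let G be a connected graph decomposed into a path P and a cycle C such that P contains at most one chord of C. Then G admits a decomposition into two paths P_1 and P_2 such that P_1 contains exactly one edge of C. -/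
/-!
Let `t` be the last vertex of `P` on `C` (there is one because `G` is connected), so that
`P = A ++ B` with `B` meeting `C` only in `t`; let `c` be a neighbour of `t` on `C` and `Q` the
rest of `C`, from `c` back to `t`. If `c ∉ A`, take `P₁ = A ++ tc` and `P₂ = Q ++ B`. If `c ∈ A`
and the vertex `d` after `c` on `A` is off `C`, write `A = T ++ cd ++ W` and take
`P₁ = T ++ ct ++ W⁻¹`, `P₂ = dc ++ Q ++ B`. Otherwise `cd` is a chord of `C` on `P`. If this
happens for both neighbours `c₁ ≠ c₂` of `t`, the two chords coincide, so two different darts of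
the path `A` carry the same edge, which is impossible.

Edges are tracked as lists up to permutation, so that the new paths are edge-disjoint and cover
`G` as soon as `P` and `C` are edge-disjoint trails covering `G`.
-/

/-- An edge of `G` is a chord of the cycle `C` if it is not an edge of `C` but joins
two (distinct) vertices of `C`. -/
def IsChord {V : Type} (G : SimpleGraph V) {w : V} (C : G.Walk w w) (e : Sym2 V) : Prop :=
  e ∈ G.edgeSet ∧ e ∉ C.edges ∧ ∃ a b : V, e = s(a, b) ∧ a ∈ C.support ∧ b ∈ C.support

namespace SimpleGraph

variable {V : Type*} {G : SimpleGraph V}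

def HasTwoPathSplit (G : SimpleGraph V) (L K : List (Sym2 V)) : Prop :=
  ∃ (u₁ v₁ u₂ v₂ : V) (P₁ : G.Walk u₁ v₁) (P₂ : G.Walk u₂ v₂), P₁.IsPath ∧ P₂.IsPath ∧
    (P₁.edges ++ P₂.edges).Perm L ∧ ∃! e, e ∈ P₁.edges ∧ e ∈ K

lemma HasTwoPathSplit.congr {L L' K K' : List (Sym2 V)} (h : G.HasTwoPathSplit L K)
    (hL : L.Perm L') (hK : ∀ e, e ∈ K ↔ e ∈ K') : G.HasTwoPathSplit L' K' := by
  obtain ⟨u₁, v₁, u₂, v₂, P₁, P₂, hP₁, hP₂, hperm, hone⟩ := h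
  exact ⟨u₁, v₁, u₂, v₂, P₁, P₂, hP₁, hP₂, hperm.trans hL, by simpa only [hK] using hone⟩

lemma HasTwoPathSplit.exists_edge_disjoint {L K : List (Sym2 V)} (h : G.HasTwoPathSplit L K)
    (hL : L.Nodup) :
    ∃ (u₁ v₁ u₂ v₂ : V) (P₁ : G.Walk u₁ v₁) (P₂ : G.Walk u₂ v₂), P₁.IsPath ∧ P₂.IsPath ∧
      (∀ e ∈ P₁.edges, e ∉ P₂.edges) ∧ (∀ e, e ∈ L ↔ e ∈ P₁.edges ∨ e ∈ P₂.edges) ∧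
      {e | e ∈ P₁.edges ∧ e ∈ K}.ncard = 1 := by
  obtain ⟨u₁, v₁, u₂, v₂, P₁, P₂, hP₁, hP₂, hperm, e, he, huniq⟩ := h
  refine ⟨u₁, v₁, u₂, v₂, P₁, P₂, hP₁, hP₂, fun _ he he' ↦ List.disjoint_of_nodup_append
    (hperm.nodup_iff.mpr hL) he he', fun _ ↦ by rw [← hperm.mem_iff, List.mem_append], ?_⟩
  exact Set.ncard_eq_one.mpr ⟨e, Set.ext fun x ↦ ⟨huniq x, fun hx ↦ hx ▸ he⟩⟩

lemma Connected.exists_mem_support_mem_support {u v w w' : V} (hconn : G.Connected)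
    (P : G.Walk u v) (C : G.Walk w w') (hcover : ∀ e ∈ G.edgeSet, e ∈ P.edges ∨ e ∈ C.edges) :
    ∃ x ∈ P.support, x ∈ C.support := by
  by_cases hw : w ∈ P.support
  · exact ⟨w, hw, C.start_mem_support⟩
  obtain ⟨p⟩ := hconn.preconnected u w
  obtain ⟨δ, -, hfst, hsnd⟩ := p.exists_boundary_dart {x | x ∈ P.support} P.start_mem_support hw
  rcases hcover δ.edge δ.edge_mem with hP | hC
  · exact (hsnd (P.snd_mem_support_of_mem_edges hP)).elim
  · exact ⟨δ.fst, hfst, C.fst_mem_support_of_mem_edges hC⟩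

namespace Walk

variable {u v w t c d : V}

lemma IsPath.append {p : G.Walk u v} {q : G.Walk v w} (hp : p.IsPath) (hq : q.IsPath)
    (hpq : ∀ x ∈ p.support, x ∈ q.support → x = v) : (p.append q).IsPath := by
  rw [isPath_def, support_append, List.nodup_append]
  refine ⟨hp.support_nodup, hq.support_nodup.sublist q.support.tail_sublist, ?_⟩
  rintro x hx y hy rfl
  have hvq : v ∉ q.support.tail :=
    (List.nodup_cons.mp (q.cons_tail_support ▸ hq.support_nodup)).1
  exact hvq (hpq x hx (List.mem_of_mem_tail hy) ▸ hy)

lemma exists_eq_append_of_mem_support (p : G.Walk u v) (S : V → Prop)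
    (h : ∃ x ∈ p.support, S x) :
    ∃ t, S t ∧ ∃ (q : G.Walk u t) (r : G.Walk t v), p = q.append r ∧
      ∀ x ∈ r.support, S x → x = t := by
  induction p with
  | nil =>
    obtain ⟨x, hx, hxS⟩ := h
    rw [support_nil, List.mem_singleton] at hx
    exact ⟨_, hx ▸ hxS, nil, nil, rfl, by simp⟩
  | @cons u _ _ hadj p ih =>
    by_cases hp : ∃ x ∈ p.support, S x
    · obtain ⟨t, ht, q, r, rfl, hr⟩ := ih hp
      exact ⟨t, ht, cons hadj q, r, rfl, hr⟩
    push Not at hp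
    have hu : S u := by
      obtain ⟨x, hx, hxS⟩ := h
      rcases List.mem_cons.mp hx with rfl | hx
      · exact hxS
      · exact (hp x hx hxS).elim
    refine ⟨u, hu, nil, cons hadj p, rfl, fun x hx hxS ↦ ?_⟩
    rcases List.mem_cons.mp hx with rfl | hx
    · rfl
    · exact (hp x hx hxS).elim

lemma hasTwoPathSplit_cons_of_notMem {A : G.Walk u t} {B : G.Walk t v} {hadj : G.Adj t c}
    {Q : G.Walk c t} (hP : (A.append B).IsPath) (hD : (cons hadj Q).IsCycle)
    (hA : ∀ e ∈ A.edges, e ∉ (cons hadj Q).edges)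
    (hB : ∀ x ∈ B.support, x ∈ (cons hadj Q).support → x = t) (hc : c ∉ A.support) :
    G.HasTwoPathSplit (A.edges ++ B.edges ++ (cons hadj Q).edges) (cons hadj Q).edges := by
  classical
  have hQB : (Q.append B).IsPath :=
    ((cons_isCycle_iff Q hadj).mp hD).1.append hP.of_append_right
      fun x hxQ hxB ↦ hB x hxB (List.mem_cons_of_mem t hxQ)
  refine ⟨u, c, c, v, A.concat hadj, Q.append B, hP.of_append_left.concat hc hadj, hQB, ?_,
    s(t, c), ?_, ?_⟩
  · simp only [edges_concat, edges_append, edges_cons, List.concat_eq_append,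
      List.perm_iff_count, List.count_append, List.count_cons, List.count_nil]
    omega
  · simp [edges_concat]
  · rintro e ⟨he, heD⟩
    simp only [edges_concat, List.concat_eq_append, List.mem_append, List.mem_singleton] at he
    exact he.resolve_left fun heA ↦ hA e heA heD

lemma hasTwoPathSplit_cons_of_append_cons_of_notMem {T : G.Walk u c} {hcd : G.Adj c d}
    {W : G.Walk d t} {B : G.Walk t v} {hadj : G.Adj t c} {Q : G.Walk c t}
    (hP : ((T.append (cons hcd W)).append B).IsPath) (hD : (cons hadj Q).IsCycle)
    (hA : ∀ e ∈ (T.append (cons hcd W)).edges, e ∉ (cons hadj Q).edges)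
    (hB : ∀ x ∈ B.support, x ∈ (cons hadj Q).support → x = t)
    (hd : d ∉ (cons hadj Q).support) :
    G.HasTwoPathSplit ((T.append (cons hcd W)).edges ++ B.edges ++ (cons hadj Q).edges)
      (cons hadj Q).edges := by
  classical
  have hdt : d ≠ t := fun h ↦ hd (h ▸ (cons hadj Q).start_mem_support)
  have hP₁ : (T.append (cons hadj.symm W.reverse)).IsPath := by
    have hnodup := hP.of_append_left.support_nodup
    simp only [isPath_def, support_append, support_cons, support_reverse,
      List.tail_cons] at hnodup ⊢
    exact ((List.reverse_perm _).append_left _).nodup_iff.mpr hnodup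
  have hP₂ : (cons hcd.symm (Q.append B)).IsPath := by
    refine (cons_isPath_iff _ _).mpr ⟨((cons_isCycle_iff Q hadj).mp hD).1.append
      hP.of_append_right fun x hxQ hxB ↦ hB x hxB (List.mem_cons_of_mem t hxQ), ?_⟩
    rw [mem_support_append_iff]
    rintro (hdQ | hdB)
    · exact hd (List.mem_cons_of_mem t hdQ)
    · exact hP.ne_of_mem_support_of_append hdt (by simp) hdB rfl
  refine ⟨u, d, d, v, _, _, hP₁, hP₂, ?_, s(t, c), ?_, ?_⟩
  · simp only [edges_append, edges_cons, edges_reverse, Sym2.eq_swap (a := c) (b := t),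
      Sym2.eq_swap (a := d) (b := c), List.perm_iff_count, List.count_append, List.count_cons,
      List.count_reverse]
    omega
  · simp [edges_append, Sym2.eq_swap (a := c) (b := t)]
  · rintro e ⟨he, heD⟩
    simp only [edges_append, edges_cons, edges_reverse, List.mem_append, List.mem_cons,
      List.mem_reverse, Sym2.eq_swap (a := c) (b := t)] at he
    rcases he with heT | rfl | heW
    · exact (hA e (by simp [edges_append, heT]) heD).elim
    · rfl
    · exact (hA e (by simp [edges_append, heW]) heD).elim

lemma hasTwoPathSplit_or_exists_dart {A : G.Walk u t} {B : G.Walk t v} {D : G.Walk t t}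
    (hP : (A.append B).IsPath) (hD : D.IsCycle) (hA : ∀ e ∈ A.edges, e ∉ D.edges)
    (hB : ∀ x ∈ B.support, x ∈ D.support → x = t) :
    G.HasTwoPathSplit (A.edges ++ B.edges ++ D.edges) D.edges ∨
      ∃ δ ∈ A.darts, δ.fst = D.snd ∧ δ.snd ∈ D.support := by
  cases D with
  | nil => exact (hD.not_nil .nil).elim
  | @cons _ c _ hadj Q =>
    by_cases hc : c ∈ A.support
    · obtain ⟨T, R, rfl⟩ := mem_support_iff_exists_append.mp hc
      cases R with
      | nil => exact (hadj.ne rfl).elim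
      | @cons _ d _ hcd W =>
        by_cases hd : d ∈ (cons hadj Q).support
        · exact .inr ⟨⟨(c, d), hcd⟩, by simp [darts_append], by simp, hd⟩
        · exact .inl (hasTwoPathSplit_cons_of_append_cons_of_notMem hP hD hA hB hd)
    · exact .inl (hasTwoPathSplit_cons_of_notMem hP hD hA hB hc)

lemma hasTwoPathSplit_append_of_isCycle {A : G.Walk u t} {B : G.Walk t v} {D : G.Walk t t}
    (hP : (A.append B).IsPath) (hD : D.IsCycle) (hA : ∀ e ∈ A.edges, e ∉ D.edges)
    (hB : ∀ x ∈ B.support, x ∈ D.support → x = t)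
    (hchord : {e | e ∈ A.edges ∧ ∀ x ∈ e, x ∈ D.support}.Subsingleton) :
    G.HasTwoPathSplit (A.edges ++ B.edges ++ D.edges) D.edges := by
  have hsupport_rev : ∀ x, x ∈ D.reverse.support ↔ x ∈ D.support := by simp
  have hedges_rev : ∀ e, e ∈ D.reverse.edges ↔ e ∈ D.edges := by simp
  obtain h | ⟨δ₁, hδ₁, hfst₁, hsnd₁⟩ := hasTwoPathSplit_or_exists_dart hP hD hA hB
  · exact h
  obtain h | ⟨δ₂, hδ₂, hfst₂, hsnd₂⟩ := hasTwoPathSplit_or_exists_dart hP hD.reverse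
    (by simpa only [hedges_rev] using hA) (by simpa only [hsupport_rev] using hB)
  · exact h.congr (by rw [edges_reverse]; exact (List.reverse_perm _).append_left _) hedges_rev
  rw [snd_reverse] at hfst₂
  rw [hsupport_rev] at hsnd₂
  have hmem_chords {δ : G.Dart} (hδ : δ ∈ A.darts) (hfst : δ.fst ∈ D.support)
      (hsnd : δ.snd ∈ D.support) : δ.edge ∈ {e | e ∈ A.edges ∧ ∀ x ∈ e, x ∈ D.support} :=
    ⟨List.mem_map_of_mem hδ, by simp [Dart.edge, Sym2.mem_iff, hfst, hsnd]⟩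
  have hδ : δ₁ = δ₂ := List.inj_on_of_nodup_map hP.of_append_left.isTrail.edges_nodup hδ₁ hδ₂
    (hchord (hmem_chords hδ₁ (hfst₁ ▸ D.getVert_mem_support 1) hsnd₁)
      (hmem_chords hδ₂ (hfst₂ ▸ D.getVert_mem_support _) hsnd₂))
  exact (hD.snd_ne_penultimate (hfst₁ ▸ hfst₂ ▸ congrArg (·.fst) hδ)).elim

lemma IsPath.hasTwoPathSplit_of_isCycle {P : G.Walk u v} {C : G.Walk w w} (hP : P.IsPath)
    (hC : C.IsCycle) (hdisj : ∀ e ∈ P.edges, e ∉ C.edges) (hmeet : ∃ x ∈ P.support, x ∈ C.support)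
    (hchord : {e | e ∈ P.edges ∧ ∀ x ∈ e, x ∈ C.support}.Subsingleton) :
    G.HasTwoPathSplit (P.edges ++ C.edges) C.edges := by
  classical
  obtain ⟨t, htC, A, B, rfl, hB⟩ := P.exists_eq_append_of_mem_support (· ∈ C.support) hmeet
  have hDe : ∀ e, e ∈ (C.rotate t htC).edges ↔ e ∈ C.edges :=
    fun _ ↦ (rotate_edges C t htC).perm.mem_iff
  have hDs : ∀ x, x ∈ (C.rotate t htC).support ↔ x ∈ C.support :=
    fun _ ↦ mem_support_rotate_iff C t htC
  have hAP : ∀ e ∈ A.edges, e ∈ (A.append B).edges := fun e he ↦ by simp [edges_append, he]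
  refine (hasTwoPathSplit_append_of_isCycle hP (hC.rotate htC)
    (fun e he ↦ by simpa only [hDe] using hdisj e (hAP e he))
    (fun x hx ↦ by simpa only [hDs] using hB x hx)
    (by simpa only [hDs] using hchord.anti fun e he ↦ ⟨hAP e he.1, he.2⟩)).congr ?_ hDe
  rw [edges_append]
  exact (rotate_edges C t htC).perm.append_left _

end Walk
end SimpleGraph

lemma subsingleton_of_ncard_isChord_le_one {V : Type} {G : SimpleGraph V} {u v w : V}
    {P : G.Walk u v} {C : G.Walk w w} (hdisj : ∀ e ∈ P.edges, e ∉ C.edges)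
    (hchord : {e : Sym2 V | e ∈ P.edges ∧ IsChord G C e}.ncard ≤ 1) :
    {e | e ∈ P.edges ∧ ∀ x ∈ e, x ∈ C.support}.Subsingleton := by
  have : Finite {e : Sym2 V | e ∈ P.edges ∧ IsChord G C e} :=
    (P.edges.finite_toSet.subset fun _ he ↦ he.1).to_subtype
  refine (Set.ncard_le_one_iff_subsingleton.mp hchord).anti ?_
  rintro e ⟨heP, he⟩
  refine ⟨heP, P.edges_subset_edgeSet heP, hdisj e heP, ?_⟩
  induction e using Sym2.ind with
  | _ a b => exact ⟨a, b, rfl, he a (Sym2.mem_mk_left a b), he b (Sym2.mem_mk_right a b)⟩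

/-- If a connected graph decomposes into a path `P` and a cycle `C` such that `P` contains
at most one chord of `C`, then it decomposes into two paths, the first of which contains
exactly one edge of `C`. -/
theorem decomp_path_cycle_one_chord {V : Type} (G : SimpleGraph V) (hconn : G.Connected)
    {u v w : V} (P : G.Walk u v) (C : G.Walk w w)
    (hP : P.IsPath) (hC : C.IsCycle)
    (hdisj : ∀ e ∈ P.edges, e ∉ C.edges)
    (hcover : ∀ e, e ∈ G.edgeSet ↔ e ∈ P.edges ∨ e ∈ C.edges)
    (hchord : {e : Sym2 V | e ∈ P.edges ∧ IsChord G C e}.ncard ≤ 1) :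
    ∃ (u₁ v₁ u₂ v₂ : V) (P₁ : G.Walk u₁ v₁) (P₂ : G.Walk u₂ v₂),
      P₁.IsPath ∧ P₂.IsPath ∧
      (∀ e ∈ P₁.edges, e ∉ P₂.edges) ∧
      (∀ e, e ∈ G.edgeSet ↔ e ∈ P₁.edges ∨ e ∈ P₂.edges) ∧
      {e : Sym2 V | e ∈ P₁.edges ∧ e ∈ C.edges}.ncard = 1 := by
  have hnodup : (P.edges ++ C.edges).Nodup :=
    List.nodup_append.mpr ⟨hP.isTrail.edges_nodup, hC.isTrail.edges_nodup,
      fun e he _ he' ↦ (hdisj e he <| · ▸ he')⟩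
  obtain ⟨u₁, v₁, u₂, v₂, P₁, P₂, hP₁, hP₂, hdisj₁₂, hcover₁₂, hone⟩ :=
    (hP.hasTwoPathSplit_of_isCycle hC hdisj
      (hconn.exists_mem_support_mem_support P C fun e he ↦ (hcover e).mp he)
      (subsingleton_of_ncard_isChord_le_one hdisj hchord)).exists_edge_disjoint hnodup
  exact ⟨u₁, v₁, u₂, v₂, P₁, P₂, hP₁, hP₂, hdisj₁₂, fun e ↦
    (hcover e).trans (List.mem_append.symm.trans (hcover₁₂ e)), hone⟩
end

section
/- If G is a k-tree with at least k+2 vertices, then no two terminal vertices of G are adjacent. -/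
/-!
Induct along the construction of the `k`-tree. Deleting the last added vertex `w` lowers the
degree of each of its neighbours by one, and every vertex of a `k`-tree with at least `k + 1`
vertices has degree at least `k`. Hence, once `G - w` still has `k + 1` vertices, a vertex of
degree `k` is not adjacent to `w`. So two adjacent terminals `u, v` of `G` differ from `w` and
stay terminals of `G - w`, which contradicts induction when `G - w` has `k + 2` vertices; when it
has only `k + 1`, the `k` neighbours of `w` would have to avoid `w, u, v`, leaving `k - 1` choices.
-/

/-- `G` is a `k`-tree: either `G ≃ K_k`, or `G` has a vertex `v` whose neighborhood
induces `K_k` such that `G - v` is a `k`-tree. -/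
inductive IsKTree (k : ℕ) : {V : Type} → SimpleGraph V → Prop
  | base {V : Type} (G : SimpleGraph V) (h : Nonempty (G ≃g SimpleGraph.completeGraph (Fin k))) :
      IsKTree k G
  | extend {V : Type} (G : SimpleGraph V) (v : V)
      (hnb : Nonempty ((G.induce (G.neighborSet v)) ≃g SimpleGraph.completeGraph (Fin k)))
      (hrec : IsKTree k (G.induce {u : V | u ≠ v})) : IsKTree k G

/-- A terminal vertex of a `k`-tree: a vertex of degree `k` (or any vertex if `G ≃ K_k`). -/
def IsTerminal (k : ℕ) {V : Type} (G : SimpleGraph V) (v : V) : Prop :=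
  (G.neighborSet v).ncard = k ∨ Nonempty (G ≃g SimpleGraph.completeGraph (Fin k))

open SimpleGraph

variable {V : Type} {k : ℕ}

lemma card_eq_of_iso_completeGraph {G : SimpleGraph V}
    (h : Nonempty (G ≃g completeGraph (Fin k))) : Nat.card V = k := by
  obtain ⟨f⟩ := h
  simpa using Nat.card_congr f.toEquiv

lemma ncard_setOf_ne [Finite V] (w : V) : {u : V | u ≠ w}.ncard = Nat.card V - 1 := by
  rw [← Set.compl_singleton_eq, Set.ncard_compl, Set.ncard_singleton]

lemma card_setOf_ne [Finite V] (w : V) : Nat.card {u : V | u ≠ w} = Nat.card V - 1 := by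
  rw [Nat.card_coe_set_eq, ncard_setOf_ne]

lemma SimpleGraph.ncard_neighborSet_of_iso_completeGraph {G : SimpleGraph V} {w : V}
    (h : Nonempty (G.induce (G.neighborSet w) ≃g completeGraph (Fin k))) :
    (G.neighborSet w).ncard = k := by
  rw [← Nat.card_coe_set_eq, card_eq_of_iso_completeGraph h]

lemma SimpleGraph.neighborSet_subset_setOf_ne (G : SimpleGraph V) (w : V) :
    G.neighborSet w ⊆ {u : V | u ≠ w} :=
  fun _ hu h => G.irrefl (h ▸ hu)

lemma SimpleGraph.adj_of_card_sub_one_le_ncard_neighborSet [Finite V] {G : SimpleGraph V}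
    {w : V} (h : Nat.card V - 1 ≤ (G.neighborSet w).ncard) {x : V} (hx : x ≠ w) : G.Adj w x := by
  have hN : G.neighborSet w = {u : V | u ≠ w} :=
    Set.eq_of_subset_of_ncard_le (G.neighborSet_subset_setOf_ne w) (by rwa [ncard_setOf_ne])
  exact (hN ▸ hx : x ∈ G.neighborSet w)

lemma SimpleGraph.ncard_neighborSet_induce_setOf_ne (G : SimpleGraph V) (w : V)
    (x : {u : V | u ≠ w}) :
    ((G.induce {u : V | u ≠ w}).neighborSet x).ncard = (G.neighborSet x \ {w}).ncard := by
  have himage :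
      Subtype.val '' (G.induce {u : V | u ≠ w}).neighborSet x = G.neighborSet x \ {w} := by
    ext y
    constructor
    · rintro ⟨y, hy, rfl⟩
      exact ⟨hy, y.2⟩
    · exact fun ⟨hy, hyw⟩ => ⟨⟨y, hyw⟩, hy, rfl⟩
  rw [← himage, Set.ncard_image_of_injective _ Subtype.val_injective]

lemma SimpleGraph.ncard_neighborSet_induce_setOf_ne_of_not_adj (G : SimpleGraph V) {w x : V}
    (hx : x ≠ w) (hxw : ¬ G.Adj x w) :
    ((G.induce {u : V | u ≠ w}).neighborSet ⟨x, hx⟩).ncard = (G.neighborSet x).ncard := by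
  rw [G.ncard_neighborSet_induce_setOf_ne, Set.sdiff_singleton_eq_self (s := G.neighborSet x) hxw]

lemma SimpleGraph.not_adj_of_ncard_neighborSet_le_induce [Finite V] (G : SimpleGraph V)
    {w x : V} (hx : x ≠ w)
    (h : (G.neighborSet x).ncard ≤ ((G.induce {u : V | u ≠ w}).neighborSet ⟨x, hx⟩).ncard) :
    ¬ G.Adj x w := by
  intro hxw
  rw [G.ncard_neighborSet_induce_setOf_ne] at h
  exact (Set.ncard_sdiff_singleton_lt_of_mem (s := G.neighborSet x) hxw).not_ge h

lemma SimpleGraph.ncard_neighborSet_add_three_le [Finite V] (G : SimpleGraph V) {u v w : V}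
    (huv : u ≠ v) (huw : u ≠ w) (hvw : v ≠ w) (hu : ¬ G.Adj u w) (hv : ¬ G.Adj v w) :
    (G.neighborSet w).ncard + 3 ≤ Nat.card V := by
  have hsub : G.neighborSet w ⊆ ({w, u, v} : Set V)ᶜ := by
    rintro x hx (rfl | rfl | rfl)
    exacts [G.irrefl hx, hu hx.symm, hv hx.symm]
  have hthree : ({w, u, v} : Set V).ncard = 3 :=
    Set.ncard_eq_three.mpr ⟨w, u, v, huw.symm, hvw.symm, huv, rfl⟩
  have := Set.ncard_le_ncard hsub
  rw [Set.ncard_compl, hthree] at this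
  have : 3 ≤ Nat.card V := hthree ▸ Set.ncard_le_card _
  omega

namespace IsKTree

/-- The bound `Nat.card V - 1` is needed for `K_k` itself, where every degree is `k - 1`. -/
theorem min_le_ncard_neighborSet [Finite V] {G : SimpleGraph V} (hG : IsKTree k G) (v : V) :
    min k (Nat.card V - 1) ≤ (G.neighborSet v).ncard := by
  revert ‹Finite V› v
  induction hG with
  | @base V G hiso =>
    intro _ v
    have hN : G.neighborSet v = {u : V | u ≠ v} := by
      obtain ⟨f⟩ := hiso
      ext x
      simp [← f.map_adj_iff, eq_comm]
    rw [hN, ncard_setOf_ne]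
    exact min_le_right _ _
  | @extend V G w hnb hrec ih =>
    intro _ v
    have hw := ncard_neighborSet_of_iso_completeGraph hnb
    obtain rfl | hvw := eq_or_ne v w
    · rw [hw]
      exact min_le_left _ _
    have hdeg : min k (Nat.card V - 1 - 1) ≤ (G.neighborSet v \ {w}).ncard := by
      have := ih ⟨v, hvw⟩
      rwa [card_setOf_ne w, G.ncard_neighborSet_induce_setOf_ne] at this
    by_cases hsmall : Nat.card V - 1 ≤ k
    · have hadj : G.Adj v w := (adj_of_card_sub_one_le_ncard_neighborSet (hw ▸ hsmall) hvw).symm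
      rw [Set.ncard_sdiff_singleton_of_mem (s := G.neighborSet v) hadj] at hdeg
      have : 0 < (G.neighborSet v).ncard := (Set.ncard_pos).mpr ⟨w, hadj⟩
      omega
    · exact le_trans (by omega) (hdeg.trans (Set.ncard_sdiff_singleton_le _ _))

theorem not_adj_of_ncard_neighborSet_eq [Finite V] {G : SimpleGraph V} (hG : IsKTree k G)
    (hcard : k + 2 ≤ Nat.card V) {u v : V} (hu : (G.neighborSet u).ncard = k)
    (hv : (G.neighborSet v).ncard = k) (huv : u ≠ v) : ¬ G.Adj u v := by
  revert ‹Finite V› hcard u v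
  induction hG with
  | @base V G hiso =>
    intro _ hcard
    have := card_eq_of_iso_completeGraph hiso
    omega
  | @extend V G w hnb hrec ih =>
    intro _ hcard u v hu hv huv hadj
    have hw := ncard_neighborSet_of_iso_completeGraph hnb
    have hnot_adj (x : V) (hx : x ≠ w) (hxk : (G.neighborSet x).ncard = k) : ¬ G.Adj x w := by
      refine G.not_adj_of_ncard_neighborSet_le_induce hx ?_
      have := hrec.min_le_ncard_neighborSet ⟨x, hx⟩
      rw [card_setOf_ne w] at this
      omega
    have huw : u ≠ w := by
      rintro rfl
      exact hnot_adj v huv.symm hv hadj.symm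
    have hvw : v ≠ w := by
      rintro rfl
      exact hnot_adj u huv hu hadj
    have hu_rec := G.ncard_neighborSet_induce_setOf_ne_of_not_adj huw (hnot_adj u huw hu)
    have hv_rec := G.ncard_neighborSet_induce_setOf_ne_of_not_adj hvw (hnot_adj v hvw hv)
    by_cases hbig : k + 2 ≤ Nat.card V - 1
    · exact ih (card_setOf_ne w ▸ hbig) (hu_rec.trans hu) (hv_rec.trans hv)
        (Subtype.coe_ne_coe.mp huv) hadj
    · have := G.ncard_neighborSet_add_three_le huv huw hvw (hnot_adj u huw hu) (hnot_adj v hvw hv)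
      omega

end IsKTree

/-- In a `k`-tree with at least `k + 2` vertices, no two terminal vertices are adjacent. -/
theorem kTree_terminals_nonadjacent {V : Type} [Fintype V] (k : ℕ) (G : SimpleGraph V)
    (hG : IsKTree k G) (hcard : k + 2 ≤ Fintype.card V)
    (u v : V) (hu : IsTerminal k G u) (hv : IsTerminal k G v) (huv : u ≠ v) :
    ¬ G.Adj u v := by
  rw [← Nat.card_eq_fintype_card] at hcard
  have hnot_complete : ¬ Nonempty (G ≃g completeGraph (Fin k)) := fun hiso => by
    have := card_eq_of_iso_completeGraph hiso
    omega
  exact hG.not_adj_of_ncard_neighborSet_eq hcard (hu.resolve_right hnot_complete)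
    (hv.resolve_right hnot_complete) huv
end

section
/- Let G be a k-tree with at least k+1 vertices and v a terminal vertex of G. Then G - v is a k-tree. -/
/-!
Induct along the construction of `G`: say `G` arises from the `k`-tree `G - w` by attaching `w`
to a `k`-clique `N(w)`, and `v ≠ w` has degree `k`. If `v` is adjacent to `w`, the clique `N(w)`
and the degree count force `N(v) \ {w} = N(w) \ {v}`, so transposing `v` and `w` is an automorphism
of `G` carrying `G - v` onto `G - w`. Otherwise `v` keeps degree `k` in `G - w`, so `G - w - v` is a
`k`-tree by induction, and `G - v` arises from it by attaching `w` to the same clique `N(w)`.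
-/

namespace SimpleGraph

variable {V : Type} {G : SimpleGraph V}

theorem eq_top_of_iso_completeGraph {W : Type} (e : G ≃g completeGraph W) : G = ⊤ := by
  ext a b
  simpa using e.map_adj_iff (v := a) (w := b) |>.symm.trans (by simp [e.injective.ne_iff])

theorem isClique_of_induce_iso_completeGraph {W : Type} {s : Set V}
    (e : G.induce s ≃g completeGraph W) : G.IsClique s :=
  induce_eq_top.mp (eq_top_of_iso_completeGraph e)

theorem card_eq_of_iso_completeGraph {k : ℕ} (e : G ≃g completeGraph (Fin k)) :
    Nat.card V = k :=
  (Nat.card_congr e.toEquiv).trans (Nat.card_fin k)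

theorem ncard_of_induce_iso_completeGraph {k : ℕ} {s : Set V}
    (e : G.induce s ≃g completeGraph (Fin k)) : s.ncard = k :=
  (Nat.card_coe_set_eq s).symm.trans (card_eq_of_iso_completeGraph e)

theorem neighborSet_sdiff_eq_of_isClique [Finite V] {v w : V} (hvw : G.Adj v w)
    (hw : G.IsClique (G.neighborSet w))
    (hdeg : (G.neighborSet v).ncard = (G.neighborSet w).ncard) :
    G.neighborSet v \ {w} = G.neighborSet w \ {v} := by
  refine (Set.eq_of_subset_of_ncard_le (fun x hx => ?_) ?_).symm
  · obtain ⟨hxw, hxv⟩ := hx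
    refine ⟨(hw hxw hvw.symm hxv).symm, ?_⟩
    rintro rfl
    exact G.irrefl hxw
  · rw [Set.ncard_sdiff_singleton_of_mem ((G.mem_neighborSet v w).mpr hvw),
      Set.ncard_sdiff_singleton_of_mem ((G.mem_neighborSet w v).mpr hvw.symm), hdeg]

theorem adj_swap_iff_of_neighborSet_sdiff_eq [DecidableEq V] {v w : V}
    (h : G.neighborSet v \ {w} = G.neighborSet w \ {v}) (a b : V) :
    G.Adj (Equiv.swap v w a) (Equiv.swap v w b) ↔ G.Adj a b := by
  have h' := Set.ext_iff.mp h
  simp only [Set.mem_sdiff, mem_neighborSet, Set.mem_singleton_iff] at h'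
  rw [Equiv.swap_apply_def, Equiv.swap_apply_def]
  split_ifs <;> subst_vars <;> grind [G.adj_comm, G.irrefl]

theorem nonempty_induce_ne_iso_of_neighborSet_sdiff_eq {v w : V}
    (h : G.neighborSet v \ {w} = G.neighborSet w \ {v}) :
    Nonempty (G.induce {u | u ≠ v} ≃g G.induce {u | u ≠ w}) := by
  classical
  let σ : G ≃g G := ⟨Equiv.swap v w, adj_swap_iff_of_neighborSet_sdiff_eq h _ _⟩
  exact ⟨σ.induce <| σ.toEquiv.bijOn fun u => by simp [σ, Equiv.swap_apply_eq_iff]⟩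

def induceInduceIso {s t : Set V} {s' : Set t} (hs' : ∀ x : t, x ∈ s' ↔ ↑x ∈ s)
    (hst : s ⊆ t) :
    (G.induce t).induce s' ≃g G.induce s where
  toFun x := ⟨x.1.1, (hs' x.1).mp x.2⟩
  invFun y := ⟨⟨y.1, hst y.2⟩, (hs' _).mpr y.2⟩
  left_inv _ := rfl
  right_inv _ := rfl
  map_rel_iff' := Iff.rfl

end SimpleGraph

open SimpleGraph

theorem IsKTree.of_iso {k : ℕ} {V W : Type} {G : SimpleGraph V} {H : SimpleGraph W}
    (hG : IsKTree k G) (e : G ≃g H) : IsKTree k H := by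
  induction hG generalizing W with
  | base G h => exact .base H ⟨h.some.comp e.symm⟩
  | extend G v hnb hrec ih =>
    refine .extend H (e v) ⟨hnb.some.comp (e.induce ?_).symm⟩ (ih (e.induce ?_))
    · exact e.toEquiv.bijOn fun u => e.map_adj_iff
    · exact e.toEquiv.bijOn fun u => e.injective.ne_iff

theorem IsKTree.finite {k : ℕ} {V : Type} {G : SimpleGraph V} (hG : IsKTree k G) : Finite V := by
  induction hG with
  | base G h => exact .of_equiv _ h.some.toEquiv.symm
  | extend G v _ _ ih =>
    classical
    have : Finite {u // u ≠ v} := ih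
    exact .of_equiv _ (Equiv.optionSubtypeNe v)

theorem IsKTree.induce_ne_of_ncard_neighborSet {k : ℕ} {V : Type} {G : SimpleGraph V}
    (hG : IsKTree k G) (hcard : k + 1 ≤ Nat.card V) {v : V}
    (hv : (G.neighborSet v).ncard = k) : IsKTree k (G.induce {u | u ≠ v}) := by
  induction hG with
  | base G h =>
    have := card_eq_of_iso_completeGraph h.some
    omega
  | extend G w hnb hrec ih =>
    have := (IsKTree.extend G w hnb hrec).finite
    obtain rfl | hwv := eq_or_ne w v
    · exact hrec
    by_cases hadj : G.Adj v w
    · have htwins := neighborSet_sdiff_eq_of_isClique hadj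
        (isClique_of_induce_iso_completeGraph hnb.some)
        (hv.trans (ncard_of_induce_iso_completeGraph hnb.some).symm)
      exact hrec.of_iso (nonempty_induce_ne_iso_of_neighborSet_sdiff_eq htwins).some.symm
    have hNv : G.neighborSet v ⊆ {u | u ≠ w} := fun u hu h => hadj (h ▸ hu)
    have hcard' : k + 1 ≤ Nat.card {u | u ≠ w} := by
      rw [Nat.card_coe_set_eq, ← hv, ← Set.ncard_insert_of_notMem G.notMem_neighborSet_self]
      exact Set.ncard_le_ncard (Set.insert_subset hwv.symm hNv)
    have hv' : ((G.induce {u | u ≠ w}).neighborSet ⟨v, hwv.symm⟩).ncard = k := by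
      rw [neighborSet_induce, Set.ncard_preimage_of_injective_subset_range Subtype.val_injective
        (by simpa using hNv), hv]
    have hNw : G.neighborSet w ⊆ {u | u ≠ v} := fun u hu h => hadj (h ▸ hu).symm
    have e₁ : (G.induce {u | u ≠ w}).induce {u | u ≠ ⟨v, hwv.symm⟩} ≃g
        G.induce {u | u ≠ v ∧ u ≠ w} :=
      induceInduceIso (fun x => Subtype.ext_iff.not.trans (and_iff_left x.2).symm) fun _ h => h.2
    have e₂ : (G.induce {u | u ≠ v}).induce {u | u ≠ ⟨w, hwv⟩} ≃g
        G.induce {u | u ≠ v ∧ u ≠ w} :=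
      induceInduceIso (fun x => Subtype.ext_iff.not.trans (and_iff_right x.2).symm) fun _ h => h.1
    exact .extend _ ⟨w, hwv⟩ ⟨hnb.some.comp (induceInduceIso (fun _ => Iff.rfl) hNw)⟩
      ((ih hcard' hv').of_iso (e₁.trans e₂.symm))

/-- Removing a terminal vertex from a `k`-tree with at least `k + 1` vertices
yields a `k`-tree. -/
theorem kTree_remove_terminal {V : Type} [Fintype V] (k : ℕ) (G : SimpleGraph V)
    (hG : IsKTree k G) (hcard : k + 1 ≤ Fintype.card V)
    (v : V) (hv : IsTerminal k G v) :
    IsKTree k (G.induce {u : V | u ≠ v}) := by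
  rw [← Nat.card_eq_fintype_card] at hcard
  rcases hv with hdeg | hcomplete
  · exact hG.induce_ne_of_ncard_neighborSet hcard hdeg
  · have := card_eq_of_iso_completeGraph hcomplete.some
    omega
end

section
/- Let G be a graph that is the union of two paths P_1 and P_2 which are edge-disjoint, share the same pair of end-vertices x and y, and let S = (V(P_1) ∩ V(P_2)) \ {x,y}. Then G admits a decomposition into at most |S| + 1 edge-disjoint cycles. -/
/-!
Let `z` be the first vertex after `x` on `P₁` that lies on `P₂`. The segments of `P₁` and `P₂`
from `x` to `z` meet only at their ends, so together they form a cycle, and the remaining segments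
from `z` to `y` are again two edge-disjoint paths whose common internal vertices lie in `S \ {z}`.
By induction on the length of `P₁`, every cycle but the last, which closes at `y`, closes at its
own vertex of `S`.
-/

def IsCycleDecomp {V : Type} (G : SimpleGraph V)
    (C : List (Σ v : V, G.Walk v v)) : Prop :=
  (∀ c ∈ C, c.2.IsCycle) ∧
  (∀ e : Sym2 V, e ∈ G.edgeSet ↔ ∃ c ∈ C, e ∈ c.2.edges) ∧
  C.Pairwise (fun c d => ∀ e, e ∈ c.2.edges → e ∉ d.2.edges)

namespace SimpleGraph

variable {V : Type*} {G : SimpleGraph V}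

open Walk

def IsCycleDecompOf (E : Set (Sym2 V)) (C : List (Σ v : V, G.Walk v v)) : Prop :=
  (∀ c ∈ C, c.2.IsCycle) ∧
  (∀ e, e ∈ E ↔ ∃ c ∈ C, e ∈ c.2.edges) ∧
  C.Pairwise (fun c d => ∀ e, e ∈ c.2.edges → e ∉ d.2.edges)

namespace IsCycleDecompOf

lemma nil : IsCycleDecompOf (G := G) ∅ [] := by
  simp [IsCycleDecompOf]

lemma cons {E : Set (Sym2 V)} {C : List (Σ v : V, G.Walk v v)} {u : V} {c : G.Walk u u}
    (hc : c.IsCycle) (hC : IsCycleDecompOf E C) (hcE : ∀ e ∈ c.edges, e ∉ E) :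
    IsCycleDecompOf ({e | e ∈ c.edges} ∪ E) (⟨u, c⟩ :: C) := by
  obtain ⟨hcyc, hcover, hdisj⟩ := hC
  refine ⟨?_, fun e => ?_, List.Pairwise.cons (fun d hd e he hed => hcE e he ?_) hdisj⟩
  · simpa [hc] using hcyc
  · simp [hcover]
  · exact (hcover e).mpr ⟨d, hd, hed⟩

lemma eq_nil_of_empty {C : List (Σ v : V, G.Walk v v)} (hC : IsCycleDecompOf ∅ C) : C = [] := by
  obtain ⟨hcyc, hcover, -⟩ := hC
  cases C with
  | nil => rfl
  | cons c C =>
    obtain ⟨e, he⟩ := List.exists_mem_of_ne_nil _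
      (edges_eq_nil.not.mpr (hcyc c List.mem_cons_self).not_nil)
    exact absurd ((hcover e).mpr ⟨c, List.mem_cons_self, he⟩) (Set.notMem_empty e)

lemma cons_append_reverse {u v z : V}
    {p₁ q₁ : G.Walk u z} {p₂ q₂ : G.Walk z v} {C : List (Σ w : V, G.Walk w w)}
    (hC : IsCycleDecompOf {e | e ∈ p₂.edges ∨ e ∈ q₂.edges} C)
    (hp : (p₁.append p₂).IsTrail) (hq : (q₁.append q₂).IsTrail)
    (hpq : ∀ e ∈ (p₁.append p₂).edges, e ∉ (q₁.append q₂).edges)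
    (hc : (p₁.append q₁.reverse).IsCycle) :
    IsCycleDecompOf {e | e ∈ (p₁.append p₂).edges ∨ e ∈ (q₁.append q₂).edges}
      (⟨u, p₁.append q₁.reverse⟩ :: C) := by
  have hdisj₁ := ((isTrail_append _ _).mp hp).2.2
  have hdisj₂ := ((isTrail_append _ _).mp hq).2.2
  convert hC.cons hc ?_ using 1
  · ext e
    simp only [edges_append, edges_reverse, List.mem_append, List.mem_reverse, Set.mem_union,
      Set.mem_ofPred_eq]
    tauto
  · simp only [edges_append, edges_reverse, List.mem_append, List.mem_reverse, Set.mem_ofPred_eq]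
    rintro e (he | he) (he' | he')
    · exact hdisj₁ he he'
    · exact hpq e (by simp [he]) (by simp [he'])
    · exact hpq e (by simp [he']) (by simp [he])
    · exact hdisj₂ he he'

end IsCycleDecompOf

namespace Walk

def commonInterior {u v : V} (p q : G.Walk u v) : Set V :=
  {w | w ∈ p.support ∧ w ∈ q.support ∧ w ≠ u ∧ w ≠ v}

lemma commonInterior_finite {u v : V} (p q : G.Walk u v) : (p.commonInterior q).Finite :=
  p.support.finite_toSet.subset fun _ hw => hw.1

lemma ncard_commonInterior_append_lt {u v z : V} {p₁ q₁ : G.Walk u z} {p₂ q₂ : G.Walk z v}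
    (hp : (p₁.append p₂).IsPath) (hzu : z ≠ u) (hzv : z ≠ v) :
    (p₂.commonInterior q₂).ncard < ((p₁.append p₂).commonInterior (q₁.append q₂)).ncard := by
  have hsub : insert z (p₂.commonInterior q₂) ⊆ (p₁.append p₂).commonInterior (q₁.append q₂) := by
    rintro w (rfl | ⟨hwp, hwq, hwz, hwv⟩)
    · simp [commonInterior, mem_support_append_iff, hzu, hzv]
    · exact ⟨(mem_support_append_iff _ _).mpr (Or.inr hwp),
        (mem_support_append_iff _ _).mpr (Or.inr hwq),
        (hp.ne_of_mem_support_of_append hwz p₁.start_mem_support hwp).symm, hwv⟩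
  calc (p₂.commonInterior q₂).ncard
      < (p₂.commonInterior q₂).ncard + 1 := lt_add_one _
    _ = (insert z (p₂.commonInterior q₂)).ncard :=
        (Set.ncard_insert_of_notMem (fun h => h.2.2.1 rfl) (commonInterior_finite _ _)).symm
    _ ≤ _ := Set.ncard_le_ncard hsub (commonInterior_finite _ _)

lemma IsPath.start_notMem_support_tail {u v : V} {p : G.Walk u v} (hp : p.IsPath) :
    u ∉ p.support.tail := by
  have hnodup := hp.support_nodup
  rw [← p.cons_tail_support, List.nodup_cons] at hnodup
  exact hnodup.1

lemma IsPath.isCycle_append_reverse {u v : V} {p q : G.Walk u v} (hp : p.IsPath) (hq : q.IsPath)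
    (huv : u ≠ v) (hpq : ∀ e ∈ p.edges, e ∉ q.edges)
    (hmeet : ∀ w ∈ p.support, w ∈ q.support → w = u ∨ w = v) :
    (p.append q.reverse).IsCycle := by
  refine hp.isCycle_append hq.reverse (fun w hwp hwq => ?_) ?_
  · have hwq' : w ∈ q.support := by simpa using List.mem_of_mem_tail hwq
    rcases hmeet w (List.mem_of_mem_tail hwp) hwq' with rfl | rfl
    · exact hp.start_notMem_support_tail hwp
    · exact hq.reverse.start_notMem_support_tail hwq
  · by_contra! hle
    rw [length_reverse] at hle
    obtain ⟨e, he⟩ := List.exists_mem_of_ne_nil _ (edges_eq_nil.not.mpr (not_nil_of_ne huv))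
    exact hpq e he (eq_of_length_le_one hle.1 hle.2 ▸ he)

lemma exists_append_first_mem {u v : V} (p : G.Walk u v) {s : Set V} (hv : v ∈ s) (huv : u ≠ v) :
    ∃ z ∈ s, ∃ (p₁ : G.Walk u z) (p₂ : G.Walk z v), p = p₁.append p₂ ∧ ¬ p₁.Nil ∧
      ∀ w ∈ p₁.support, w ∈ s → w = u ∨ w = z := by
  induction p with
  | nil => exact absurd rfl huv
  | @cons u w v h p ih =>
    by_cases hw : w ∈ s
    · exact ⟨w, hw, h.toWalk, p, rfl, not_nil_cons, by simp⟩
    · obtain ⟨z, hz, p₁, p₂, rfl, -, hmin⟩ := ih hv (fun h => hw (h ▸ hv))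
      refine ⟨z, hz, cons h p₁, p₂, rfl, not_nil_cons, ?_⟩
      simp only [support_cons, List.mem_cons, forall_eq_or_imp, true_or, imp_true_iff, true_and]
      exact fun w' hw' hws => .inr <|
        (hmin w' hw' hws).resolve_left (by rintro rfl; exact hw hws)

theorem IsPath.exists_isCycleDecompOf {u v : V} {p q : G.Walk u v} (hp : p.IsPath)
    (hq : q.IsPath) (hpq : ∀ e ∈ p.edges, e ∉ q.edges) :
    ∃ C : List (Σ w : V, G.Walk w w), IsCycleDecompOf {e | e ∈ p.edges ∨ e ∈ q.edges} C ∧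
      C.length ≤ (p.commonInterior q).ncard + 1 := by
  induction hn : p.length using Nat.strong_induction_on generalizing u p q with
  | _ n ih =>
  obtain rfl | huv := eq_or_ne u v
  · obtain rfl := eq_nil_iff_nil.mpr (isPath_iff_nil.mp hp)
    obtain rfl := eq_nil_iff_nil.mpr (isPath_iff_nil.mp hq)
    exact ⟨[], by simpa using IsCycleDecompOf.nil, by simp⟩
  obtain ⟨z, hzq, p₁, p₂, rfl, hp₁, hmeet⟩ :=
    p.exists_append_first_mem (s := {w | w ∈ q.support}) q.end_mem_support huv
  obtain ⟨q₁, q₂, hq₁, hq₂, rfl⟩ := hq.mem_support_iff_exists_append.mp hzq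
  have huz : u ≠ z := by
    rintro rfl
    exact hp₁ (isPath_iff_nil.mp hp.of_append_left)
  have hcycle : (p₁.append q₁.reverse).IsCycle := by
    refine hp.of_append_left.isCycle_append_reverse hq₁ huz (fun e he₁ he₂ => ?_) ?_
    · exact hpq e (by simp [he₁]) (by simp [he₂])
    · exact fun w hw hwq => hmeet w hw ((mem_support_append_iff _ _).mpr (Or.inl hwq))
  have hlen₂ : p₂.length < n := by
    rw [← hn, length_append]
    have := not_nil_iff_lt_length.mp hp₁
    omega
  obtain ⟨C, hC, hlen⟩ := ih p₂.length hlen₂ hp.of_append_right hq₂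
    (fun e he₁ he₂ => hpq e (by simp [he₁]) (by simp [he₂])) rfl
  refine ⟨⟨u, p₁.append q₁.reverse⟩ :: C,
    hC.cons_append_reverse hp.isTrail hq.isTrail hpq hcycle, ?_⟩
  by_cases hzv : z = v
  · subst hzv
    obtain rfl := eq_nil_iff_nil.mpr (isPath_iff_nil.mp hp.of_append_right)
    obtain rfl := eq_nil_iff_nil.mpr (isPath_iff_nil.mp hq₂)
    simp [IsCycleDecompOf.eq_nil_of_empty (by simpa using hC)]
  · have := ncard_commonInterior_append_lt (q₁ := q₁) (q₂ := q₂) hp (Ne.symm huz) hzv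
    simp only [List.length_cons]
    omega

end Walk
end SimpleGraph

/-- If `G` is the union of two edge-disjoint paths `P₁, P₂` with the same end-vertices
`x, y`, and `S` is the set of common internal vertices, then `G` decomposes into at most
`|S| + 1` cycles. -/
theorem cycleDecomp_two_paths {V : Type} (G : SimpleGraph V) {x y : V}
    (P₁ P₂ : G.Walk x y) (hP₁ : P₁.IsPath) (hP₂ : P₂.IsPath)
    (hdisj : ∀ e ∈ P₁.edges, e ∉ P₂.edges)
    (hcover : ∀ e, e ∈ G.edgeSet ↔ e ∈ P₁.edges ∨ e ∈ P₂.edges) :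
    ∃ C, IsCycleDecomp G C ∧
      C.length ≤ {v : V | v ∈ P₁.support ∧ v ∈ P₂.support ∧ v ≠ x ∧ v ≠ y}.ncard + 1 := by
  obtain ⟨C, hC, hlen⟩ := hP₁.exists_isCycleDecompOf hP₂ hdisj
  have hE : G.edgeSet = {e | e ∈ P₁.edges ∨ e ∈ P₂.edges} := Set.ext hcover
  rw [← hE] at hC
  exact ⟨C, hC, hlen⟩
end
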